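/- Under the PRP mediator and action-targeted utility, in any improvement cycle, for every improvement step r and every topic k, B_k(a^r) = B_k(a^{r+1}): the highest quality on every topic is constant throughout the cycle. -/

import Mathlib

/-!
Induct over the topics in the order of `D k * S_k`. Fix `k`, put `c = D k * S_k ≥ 0`, and
assume the best quality is already constant, equal to `S_j`, on every topic with
`D j * S_j > c`. On each such topic count the top authors earning more than `c`, capped at
the number that can: this potential never decreases along an improvement step, because an
author giving up such a slot earned more than `c`, so after her improvement she earns more
than `c` on her new topic and takes a slot there. If `B_k` ever left `S_k`, the step where it
drops is made by the unique top author on `k`, who earned exactly `c`; she gains a slot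
without anyone losing one, so the potential strictly increases, impossible around a cycle.
-/

open Finset

noncomputable section

/-- Highest quality of a document on topic `k` under profile `a`:
`B_k(a) = max_j Q_{j,k} · 1[a_j = k]` (with value `0` when the max is over an empty set). -/
def hiQ {n m : ℕ} (Q : Fin n → Fin m → ℝ) (k : Fin m) (a : Fin n → Fin m) : ℝ :=
  Finset.univ.fold max 0 (fun j => if a j = k then Q j k else 0)

/-- Number of authors writing on topic `k` with the highest quality `B_k(a)`. -/
def numTop {n m : ℕ} (Q : Fin n → Fin m → ℝ) (k : Fin m) (a : Fin n → Fin m) : ℕ :=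
  (Finset.univ.filter (fun j => a j = k ∧ Q j k = hiQ Q k a)).card

/-- The PRP mediator: first-rank probability of author `j` on topic `k` under profile `a`. -/
def prp {n m : ℕ} (Q : Fin n → Fin m → ℝ) (k : Fin m) (a : Fin n → Fin m) (j : Fin n) : ℝ :=
  if a j = k ∧ Q j k = hiQ Q k a then 1 / (numTop Q k a : ℝ) else 0

/-- Exposure-targeted utility under the PRP mediator. -/
def uEx {n m : ℕ} (D : Fin m → ℝ) (Q : Fin n → Fin m → ℝ) (a : Fin n → Fin m) (j : Fin n) : ℝ :=
  D (a j) * prp Q (a j) a j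

/-- Action-targeted utility under the PRP mediator. -/
def uAc {n m : ℕ} (D : Fin m → ℝ) (Q : Fin n → Fin m → ℝ) (a : Fin n → Fin m) (j : Fin n) : ℝ :=
  D (a j) * prp Q (a j) a j * Q j (a j)

/-- `b` is obtained from `a` by a unilateral deviation of author `p` strictly
increasing her utility (an improvement step). -/
def ImpStep {n m : ℕ} (u : (Fin n → Fin m) → Fin n → ℝ)
    (a b : Fin n → Fin m) (p : Fin n) : Prop :=
  (∀ i, i ≠ p → b i = a i) ∧ b p ≠ a p ∧ u a p < u b p

/-- `γ` is an improvement path: each consecutive pair of profiles is an improvement step. -/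
def IsImpPath {n m l : ℕ} (u : (Fin n → Fin m) → Fin n → ℝ)
    (γ : Fin (l + 1) → Fin n → Fin m) : Prop :=
  ∀ r : Fin l, ∃ p, ImpStep u (γ r.castSucc) (γ r.succ) p

/-- `W_k(γ)`: the minimum of `H_k` over all profiles in the finite path `γ`. -/
def minTop {n m l : ℕ} (Q : Fin n → Fin m → ℝ) (k : Fin m)
    (γ : Fin (l + 1) → Fin n → Fin m) : ℕ :=
  Finset.univ.inf' Finset.univ_nonempty (fun r => numTop Q k (γ r))

/-- `S_k(γ)`: the maximum of `B_k` over all profiles in the finite path `γ`. -/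
def maxQ {n m l : ℕ} (Q : Fin n → Fin m → ℝ) (k : Fin m)
    (γ : Fin (l + 1) → Fin n → Fin m) : ℝ :=
  Finset.univ.sup' Finset.univ_nonempty (fun r => hiQ Q k (γ r))

section Profile
variable {n m : ℕ} (Q : Fin n → Fin m → ℝ) {k : Fin m} {a b : Fin n → Fin m} {p : Fin n}

lemma hiQ_nonneg : 0 ≤ hiQ Q k a := by
  rw [hiQ, Finset.le_fold_max]
  exact Or.inl le_rfl

lemma le_hiQ {j : Fin n} (h : a j = k) : Q j k ≤ hiQ Q k a := by
  rw [hiQ, Finset.le_fold_max]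
  exact Or.inr ⟨j, mem_univ j, by rw [if_pos h]⟩

lemma hiQ_le {x : ℝ} (hx : 0 ≤ x) (h : ∀ j, a j = k → Q j k ≤ x) : hiQ Q k a ≤ x := by
  rw [hiQ, Finset.fold_max_le]
  refine ⟨hx, fun j _ => ?_⟩
  split_ifs with hj
  exacts [h j hj, hx]

lemma exists_eq_hiQ_of_pos (h : 0 < hiQ Q k a) : ∃ j, a j = k ∧ Q j k = hiQ Q k a := by
  obtain h0 | ⟨j, -, hj⟩ := (Finset.le_fold_max (hiQ Q k a)).1 (le_refl (hiQ Q k a))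
  · exact absurd h0 h.not_ge
  · by_cases hjk : a j = k
    · rw [if_pos hjk] at hj
      exact ⟨j, hjk, le_antisymm (le_hiQ Q hjk) hj⟩
    · rw [if_neg hjk] at hj
      exact absurd hj h.not_ge

lemma hiQ_congr (h : ∀ j, a j = k ↔ b j = k) : hiQ Q k a = hiQ Q k b :=
  Finset.fold_congr fun j _ => by simp only [h j]

lemma numTop_congr (h : ∀ j, a j = k ↔ b j = k) : numTop Q k a = numTop Q k b := by
  simp only [numTop, h, hiQ_congr Q h]

variable (hab : ∀ i, i ≠ p → b i = a i)
include hab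

lemma hiQ_le_of_ne (hk : a p ≠ k) : hiQ Q k a ≤ hiQ Q k b :=
  hiQ_le Q (hiQ_nonneg Q) fun j hj =>
    le_hiQ Q (by rwa [hab j (by rintro rfl; exact hk hj)])

lemma numTop_add_ite_eq (hB : hiQ Q k a = hiQ Q k b) :
    numTop Q k a + (if b p = k ∧ Q p k = hiQ Q k b then 1 else 0) =
      numTop Q k b + (if a p = k ∧ Q p k = hiQ Q k a then 1 else 0) := by
  simp only [numTop, card_filter]
  have hrest : ∑ i ∈ univ.erase p, (if a i = k ∧ Q i k = hiQ Q k a then 1 else 0) =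
      ∑ i ∈ univ.erase p, (if b i = k ∧ Q i k = hiQ Q k b then 1 else 0) :=
    sum_congr rfl fun i hi => by rw [hab i (ne_of_mem_erase hi), hB]
  rw [← add_sum_erase _ _ (mem_univ p), ← add_sum_erase _ _ (mem_univ p), hrest]
  ring

lemma unique_top_of_hiQ_lt (hlt : hiQ Q k b < hiQ Q k a) :
    a p = k ∧ Q p k = hiQ Q k a ∧ numTop Q k a = 1 := by
  have hp : a p = k := by
    by_contra hk
    exact (hiQ_le_of_ne Q hab hk).not_gt hlt
  have honly : ∀ x, a x = k → Q x k = hiQ Q k a → x = p := by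
    intro x hx hxQ
    by_contra hxp
    have := le_hiQ Q (k := k) (a := b) (by rwa [hab x hxp])
    linarith
  obtain ⟨j, hj, hjQ⟩ := exists_eq_hiQ_of_pos Q ((hiQ_nonneg Q).trans_lt hlt)
  obtain rfl := honly j hj hjQ
  refine ⟨hp, hjQ, card_eq_one.2 ⟨j, ?_⟩⟩
  ext x
  simp only [mem_filter, mem_univ, true_and, mem_singleton]
  exact ⟨fun h => honly x h.1 h.2, by rintro rfl; exact ⟨hp, hjQ⟩⟩

end Profile

section Utility
variable {n m : ℕ} {D : Fin m → ℝ} {Q : Fin n → Fin m → ℝ} {a : Fin n → Fin m} {j : Fin n}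

lemma uAc_of_top (h : Q j (a j) = hiQ Q (a j) a) :
    uAc D Q a j = D (a j) * hiQ Q (a j) a / numTop Q (a j) a := by
  rw [uAc, prp, if_pos ⟨rfl, h⟩, ← h]
  ring

lemma top_of_uAc_ne_zero (h : uAc D Q a j ≠ 0) : Q j (a j) = hiQ Q (a j) a := by
  by_contra hj
  exact h (by rw [uAc, prp, if_neg fun h' => hj h'.2]; ring)

lemma one_le_numTop (h : Q j (a j) = hiQ Q (a j) a) : 1 ≤ numTop Q (a j) a :=
  card_pos.2 ⟨j, mem_filter.2 ⟨mem_univ j, rfl, h⟩⟩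

end Utility

/-- For `c ≥ 0` this is `min H N`, where `N` is the number of top authors that can share the
value `v` of a topic while each of them earns more than `c`. -/
def slotCount (c v : ℝ) (H : ℕ) : ℕ :=
  Nat.count (fun h : ℕ => c * (h + 1) < v) H

section SlotCount
variable {c v : ℝ}

lemma slotCount_succ (H : ℕ) :
    slotCount c v (H + 1) = slotCount c v H + if c * (H + 1) < v then 1 else 0 :=
  Nat.count_succ _ _

lemma slotCount_mono : Monotone (slotCount c v) :=
  Nat.count_monotone _

lemma slotCount_eq_zero (hc : 0 ≤ c) (hv : v ≤ c) (H : ℕ) : slotCount c v H = 0 :=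
  Nat.count_of_forall_not fun h _ => not_lt.2 <|
    hv.trans (le_mul_of_one_le_right hc (by linarith [h.cast_nonneg (α := ℝ)]))

end SlotCount

def slotPotential {n m : ℕ} (D S : Fin m → ℝ) (c : ℝ) (Q : Fin n → Fin m → ℝ)
    (a : Fin n → Fin m) : ℕ :=
  ∑ j, slotCount c (D j * S j) (numTop Q j a)

section Step
variable {n m : ℕ} {D S : Fin m → ℝ} {c : ℝ} {Q : Fin n → Fin m → ℝ} {a b : Fin n → Fin m}
  {p : Fin n}

lemma apply_eq_iff_of_ne (hab : ∀ i, i ≠ p → b i = a i) {k : Fin m} (ha : k ≠ a p)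
    (hb : k ≠ b p) (i : Fin n) : a i = k ↔ b i = k := by
  by_cases hi : i = p
  · subst hi
    exact ⟨fun h => absurd h.symm ha, fun h => absurd h.symm hb⟩
  · rw [hab i hi]

lemma slotPotential_sub_slotPotential (hab : ∀ i, i ≠ p → b i = a i) (hne : b p ≠ a p) :
    (slotPotential D S c Q b : ℤ) - slotPotential D S c Q a =
      ((slotCount c (D (a p) * S (a p)) (numTop Q (a p) b) : ℤ) -
          slotCount c (D (a p) * S (a p)) (numTop Q (a p) a)) +
        ((slotCount c (D (b p) * S (b p)) (numTop Q (b p) b) : ℤ) -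
          slotCount c (D (b p) * S (b p)) (numTop Q (b p) a)) := by
  push_cast [slotPotential]
  rw [← sum_sub_distrib]
  refine Fintype.sum_eq_add _ _ hne.symm fun k ⟨ha, hb⟩ => ?_
  rw [numTop_congr Q (apply_eq_iff_of_ne hab ha hb), sub_self]

variable (hab : ∀ i, i ≠ p → b i = a i) (hne : b p ≠ a p) (hc : 0 ≤ c)
  (hconst : ∀ k, c < D k * S k → hiQ Q k a = S k ∧ hiQ Q k b = S k)
include hab hne hc hconst

lemma slotCount_new_le :
    slotCount c (D (b p) * S (b p)) (numTop Q (b p) a) ≤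
      slotCount c (D (b p) * S (b p)) (numTop Q (b p) b) := by
  by_cases hV : c < D (b p) * S (b p)
  · obtain ⟨hBa, hBb⟩ := hconst _ hV
    have h := numTop_add_ite_eq Q hab (hBa.trans hBb.symm)
    rw [if_neg (not_and_of_not_left _ hne.symm)] at h
    exact slotCount_mono (by split_ifs at h <;> omega)
  · rw [slotCount_eq_zero hc (not_lt.1 hV)]
    exact Nat.zero_le _

lemma slotCount_new_lt (hD : ∀ k, 0 ≤ D k) (hS : ∀ k, hiQ Q k b ≤ S k)
    (hu : c < uAc D Q b p) :
    slotCount c (D (b p) * S (b p)) (numTop Q (b p) a) <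
      slotCount c (D (b p) * S (b p)) (numTop Q (b p) b) := by
  have htop := top_of_uAc_ne_zero (hc.trans_lt hu).ne'
  have hH : (1 : ℝ) ≤ numTop Q (b p) b := by exact_mod_cast one_le_numTop htop
  have hlt : c * numTop Q (b p) b < D (b p) * S (b p) := by
    rw [uAc_of_top htop, lt_div_iff₀ (by linarith)] at hu
    exact hu.trans_le (mul_le_mul_of_nonneg_left (hS _) (hD _))
  obtain ⟨hBa, hBb⟩ := hconst _ ((le_mul_of_one_le_right hc hH).trans_lt hlt)
  have h := numTop_add_ite_eq Q hab (hBa.trans hBb.symm)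
  rw [if_pos ⟨rfl, htop⟩, if_neg (not_and_of_not_left _ hne.symm), add_zero] at h
  rw [← h, slotCount_succ, if_pos (by rw [← h] at hlt; exact_mod_cast hlt)]
  exact Nat.lt_succ_self _

lemma slotCount_old_le_succ :
    slotCount c (D (a p) * S (a p)) (numTop Q (a p) a) ≤
      slotCount c (D (a p) * S (a p)) (numTop Q (a p) b) + 1 := by
  by_cases hV : c < D (a p) * S (a p)
  · obtain ⟨hBa, hBb⟩ := hconst _ hV
    have h := numTop_add_ite_eq Q hab (hBa.trans hBb.symm)
    rw [if_neg (not_and_of_not_left _ hne)] at h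
    calc slotCount c _ (numTop Q (a p) a)
        ≤ slotCount c _ (numTop Q (a p) b + 1) := slotCount_mono (by split_ifs at h <;> omega)
      _ ≤ slotCount c _ (numTop Q (a p) b) + 1 := by rw [slotCount_succ]; split_ifs <;> omega
  · rw [slotCount_eq_zero hc (not_lt.1 hV)]
    exact Nat.zero_le _

lemma slotCount_old_le (hu : uAc D Q a p ≤ c) :
    slotCount c (D (a p) * S (a p)) (numTop Q (a p) a) ≤
      slotCount c (D (a p) * S (a p)) (numTop Q (a p) b) := by
  by_cases hV : c < D (a p) * S (a p)
  · obtain ⟨hBa, hBb⟩ := hconst _ hV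
    have h := numTop_add_ite_eq Q hab (hBa.trans hBb.symm)
    rw [if_neg (not_and_of_not_left _ hne), add_zero] at h
    by_cases htop : Q p (a p) = hiQ Q (a p) a
    · rw [if_pos ⟨rfl, htop⟩] at h
      have hH := one_le_numTop htop
      rw [h, slotCount_succ, if_neg, add_zero]
      -- otherwise `p` would have earned `D (a p) * S (a p) / numTop Q (a p) a > c`
      intro hlt
      rw [uAc_of_top htop, hBa, div_le_iff₀ (by exact_mod_cast hH)] at hu
      push_cast [h] at hu
      linarith
    · rw [if_neg fun h' => htop h'.2] at h
      rw [h, add_zero]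
  · rw [slotCount_eq_zero hc (not_lt.1 hV)]
    exact Nat.zero_le _

end Step

section ImpStep
variable {n m : ℕ} {D S : Fin m → ℝ} {c : ℝ} {Q : Fin n → Fin m → ℝ} {a b : Fin n → Fin m}
  {p : Fin n} (hD : ∀ k, 0 ≤ D k) (hc : 0 ≤ c) (hS : ∀ k, hiQ Q k b ≤ S k)
  (hconst : ∀ k, c < D k * S k → hiQ Q k a = S k ∧ hiQ Q k b = S k)
  (hstep : ImpStep (uAc D Q) a b p)
include hD hc hS hconst hstep

lemma slotPotential_le_of_impStep : slotPotential D S c Q a ≤ slotPotential D S c Q b := by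
  obtain ⟨hab, hne, himp⟩ := hstep
  have hΔ := slotPotential_sub_slotPotential (D := D) (S := S) (c := c) (Q := Q) hab hne
  have hnew := slotCount_new_le hab hne hc hconst
  by_cases hu : c < uAc D Q a p
  · have := slotCount_new_lt hab hne hc hconst hD hS (hu.trans himp)
    have := slotCount_old_le_succ hab hne hc hconst
    omega
  · have := slotCount_old_le hab hne hc hconst (not_lt.1 hu)
    omega

lemma slotPotential_lt_of_impStep (hu : c ≤ uAc D Q a p) (hV : D (a p) * S (a p) ≤ c) :
    slotPotential D S c Q a < slotPotential D S c Q b := by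
  obtain ⟨hab, hne, himp⟩ := hstep
  have hΔ := slotPotential_sub_slotPotential (D := D) (S := S) (c := c) (Q := Q) hab hne
  have := slotCount_new_lt hab hne hc hconst hD hS (hu.trans_lt himp)
  rw [slotCount_eq_zero hc hV, slotCount_eq_zero hc hV] at hΔ
  omega

end ImpStep

section Cycle
variable {l : ℕ}

lemma Monotone.eq_of_apply_last_eq {α : Type*} [PartialOrder α] {f : Fin (l + 1) → α}
    (hf : Monotone f) (hcyc : f (Fin.last l) = f 0) (s t : Fin (l + 1)) : f s = f t :=
  le_antisymm ((hf (Fin.le_last s)).trans (hcyc.le.trans (hf (Fin.zero_le t))))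
    ((hf (Fin.le_last t)).trans (hcyc.le.trans (hf (Fin.zero_le s))))

lemma exists_exit_of_cycle {P : Fin (l + 1) → Prop} (hcyc : P (Fin.last l) → P 0)
    (h₁ : ∃ t, P t) (h₂ : ∃ t, ¬ P t) : ∃ r : Fin l, P r.castSucc ∧ ¬ P r.succ := by
  by_contra! h
  have hP : Monotone P := Fin.monotone_iff_le_succ.2 h
  obtain ⟨s, hs⟩ := h₁
  obtain ⟨t, ht⟩ := h₂
  exact ht (hP (Fin.zero_le t) (hcyc (hP (Fin.le_last s) hs)))

variable {n m : ℕ} {Q : Fin n → Fin m → ℝ} {γ : Fin (l + 1) → Fin n → Fin m} {k : Fin m}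

lemma hiQ_le_maxQ (t : Fin (l + 1)) : hiQ Q k (γ t) ≤ maxQ Q k γ :=
  le_sup' (fun r => hiQ Q k (γ r)) (mem_univ t)

lemma maxQ_nonneg : 0 ≤ maxQ Q k γ :=
  (hiQ_nonneg Q).trans (hiQ_le_maxQ 0)

lemma exists_hiQ_eq_maxQ : ∃ t, hiQ Q k (γ t) = maxQ Q k γ :=
  let ⟨t, _, ht⟩ := exists_mem_eq_sup' univ_nonempty (fun r => hiQ Q k (γ r))
  ⟨t, ht.symm⟩

lemma hiQ_eq_maxQ_of_forall_lt {D : Fin m → ℝ} (hD : ∀ k, 0 ≤ D k)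
    (hγ : IsImpPath (uAc D Q) γ) (hcyc : γ (Fin.last l) = γ 0)
    (hhigher : ∀ j, D k * maxQ Q k γ < D j * maxQ Q j γ → ∀ t, hiQ Q j (γ t) = maxQ Q j γ)
    (t : Fin (l + 1)) : hiQ Q k (γ t) = maxQ Q k γ := by
  set c := D k * maxQ Q k γ
  have hc : 0 ≤ c := mul_nonneg (hD k) maxQ_nonneg
  have hconst (r : Fin l) (j : Fin m) (hj : c < D j * maxQ Q j γ) :
      hiQ Q j (γ r.castSucc) = maxQ Q j γ ∧ hiQ Q j (γ r.succ) = maxQ Q j γ :=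
    ⟨hhigher j hj _, hhigher j hj _⟩
  set Φ := fun t => slotPotential D (maxQ Q · γ) c Q (γ t)
  have hΦ : Monotone Φ := Fin.monotone_iff_le_succ.2 fun r =>
    let ⟨_, hp⟩ := hγ r
    slotPotential_le_of_impStep hD hc (fun _ => hiQ_le_maxQ _) (hconst r) hp
  by_contra ht
  obtain ⟨r, hr, hr'⟩ := exists_exit_of_cycle (P := fun t => hiQ Q k (γ t) = maxQ Q k γ)
    (by simp only [hcyc, imp_self]) exists_hiQ_eq_maxQ ⟨t, ht⟩
  obtain ⟨p, hp⟩ := hγ r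
  obtain ⟨hpk, htop, hone⟩ :=
    unique_top_of_hiQ_lt Q hp.1 (hr ▸ (hiQ_le_maxQ _).lt_of_ne hr')
  rw [← hpk] at htop hone
  have hu : c ≤ uAc D Q (γ r.castSucc) p := by
    rw [uAc_of_top htop, hone, hpk, hr, Nat.cast_one, div_one]
  refine (slotPotential_lt_of_impStep hD hc (fun _ => hiQ_le_maxQ _) (hconst r) hp hu
    (by rw [hpk])).ne (hΦ.eq_of_apply_last_eq ?_ _ _)
  simp only [Φ, hcyc]

end Cycle

theorem stmt6_general {n m l : ℕ} (D : Fin m → ℝ) (Q : Fin n → Fin m → ℝ)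
    (hD : ∀ k, 0 ≤ D k)
    (γ : Fin (l + 1) → Fin n → Fin m) (hγ : IsImpPath (uAc D Q) γ)
    (hcyc : γ (Fin.last l) = γ 0)
    (hsort : ∀ k k' : Fin m, k ≤ k' → D k' * maxQ Q k' γ ≤ D k * maxQ Q k γ)
    (r : Fin l) (k : Fin m) :
    hiQ Q k (γ r.castSucc) = hiQ Q k (γ r.succ) := by
  have hconst : ∀ k t, hiQ Q k (γ t) = maxQ Q k γ := by
    intro k
    induction k using WellFoundedLT.induction with
    | _ k IH =>
      refine hiQ_eq_maxQ_of_forall_lt hD hγ hcyc fun j hj => IH j ?_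
      by_contra! hkj
      exact (hsort k j hkj).not_gt hj
  rw [hconst k, hconst k]

/-- In any improvement cycle under PRP/action-targeted utility (topics indexed so that
`D(k)·S_k(c)` is non-increasing), the highest quality on every topic is unchanged at
every step of the cycle. -/
theorem stmt6 {n m l : ℕ} (D : Fin m → ℝ) (Q : Fin n → Fin m → ℝ)
    (hD : ∀ k, 0 ≤ D k) (hDsum : ∑ k, D k = 1)
    (hQ : ∀ j k, Q j k ∈ Set.Icc (0:ℝ) 1)
    (γ : Fin (l + 1) → Fin n → Fin m) (hγ : IsImpPath (uAc D Q) γ)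
    (hcyc : γ (Fin.last l) = γ 0)
    (hsort : ∀ k k' : Fin m, k ≤ k' → D k' * maxQ Q k' γ ≤ D k * maxQ Q k γ)
    (r : Fin l) (k : Fin m) :
    hiQ Q k (γ r.castSucc) = hiQ Q k (γ r.succ) :=
  stmt6_general D Q hD γ hγ hcyc hsort r k
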